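/- arXiv:1702.06477 — 6 statements merged into one kernel-verified Lean document; each statement's English description precedes it below -/
import Mathlib

section
/- Let D be a self-adjoint nonnegative operator on a finite-dimensional real inner product space, δ > 0, α > 0, and let w : [0,1] → V be differentiable and satisfy (tD + δI) w'(t) + α D w(t) = 0 for all t ∈ (0,1]. Then ‖w(t)‖ ≤ ‖w(0)‖ for all t ∈ [0,1]. -/
open Real

/-! For `s ≥ 0` the operator `A = s • D + δ • 1` is positive definite, hence invertible in finite
dimension, so at time `s` one may write `w = A x`. Pairing `A w' = -α D w` with `x` and using the
symmetry of `A` and `D` gives `⟪w', w⟫ = -α ⟪A x, D x⟫ = -α (s ‖D x‖² + δ ⟪x, D x⟫) ≤ 0`, so `‖w‖²`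
is nonincreasing. -/

namespace LinearMap

variable {E : Type*} [NormedAddCommGroup E] [InnerProductSpace ℝ E]

lemma IsPositive.injective_add_smul_one {T : E →ₗ[ℝ] E} (hT : T.IsPositive) {δ : ℝ}
    (hδ : 0 < δ) : Function.Injective (T + δ • 1 : E →ₗ[ℝ] E) := by
  rw [← ker_eq_bot, ker_eq_bot']
  intro v hv
  have h : inner ℝ (T v) v + δ * ‖v‖ ^ 2 = 0 := by
    simpa [inner_add_left, real_inner_smul_left, real_inner_self_eq_norm_sq] using
      congrArg (inner ℝ · v) hv
  have hv0 : ‖v‖ ^ 2 = 0 := by nlinarith [hT.inner_nonneg_left v, sq_nonneg ‖v‖]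
  simpa using hv0

lemma IsPositive.inner_nonpos_of_smul_add_smul_add_smul_eq_zero [FiniteDimensional ℝ E]
    {D : E →ₗ[ℝ] E} (hD : D.IsPositive) {s δ α : ℝ} (hs : 0 ≤ s) (hδ : 0 < δ) (hα : 0 ≤ α)
    {u w : E} (h : s • D u + δ • u + α • D w = 0) : inner ℝ u w ≤ 0 := by
  set A : E →ₗ[ℝ] E := s • D + δ • 1 with hA_def
  have hA : A.IsPositive := (hD.smul_of_nonneg hs).add (isPositive_one.smul_of_nonneg hδ.le)
  obtain ⟨x, rfl⟩ :=
    injective_iff_surjective.mp ((hD.smul_of_nonneg hs).injective_add_smul_one hδ) w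
  have hAu : A u = -(α • D (A x)) := eq_neg_iff_add_eq_zero.2 h
  have hADx : 0 ≤ inner ℝ (A x) (D x) := by
    simp only [hA_def, add_apply, smul_apply, Module.End.one_apply, inner_add_left,
      real_inner_smul_left]
    exact add_nonneg (mul_nonneg hs real_inner_self_nonneg)
      (mul_nonneg hδ.le (hD.inner_nonneg_right x))
  calc inner ℝ u (A x) = inner ℝ (A u) x := (hA.isSymmetric u x).symm
    _ = -α * inner ℝ (A x) (D x) := by
      rw [hAu, inner_neg_left, real_inner_smul_left, hD.isSymmetric]; ring
    _ ≤ 0 := by nlinarith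

end LinearMap

lemma antitoneOn_norm_of_inner_deriv_nonpos {E : Type*} [NormedAddCommGroup E]
    [InnerProductSpace ℝ E] {w w' : ℝ → E} {a b : ℝ}
    (hw : ∀ t ∈ Set.Icc a b, HasDerivAt w (w' t) t)
    (hw' : ∀ t ∈ Set.Ioo a b, inner ℝ (w' t) (w t) ≤ 0) :
    AntitoneOn (‖w ·‖) (Set.Icc a b) := by
  have hsq : AntitoneOn (‖w ·‖ ^ 2) (Set.Icc a b) :=
    antitoneOn_of_hasDerivWithinAt_nonpos (convex_Icc a b)
      (fun t ht ↦ (hw t ht).norm_sq.continuousAt.continuousWithinAt)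
      (fun t ht ↦ (hw t (interior_subset ht)).norm_sq.hasDerivWithinAt)
      (fun t ht ↦ by
        rw [interior_Icc] at ht
        linarith [real_inner_comm (w t) (w' t) ▸ hw' t ht])
  exact fun s hs t ht hst ↦
    (pow_le_pow_iff_left₀ (norm_nonneg _) (norm_nonneg _) two_ne_zero).1 (hsq hs ht hst)

theorem pseudoparabolic_nonexpansive {V : Type*} [NormedAddCommGroup V]
    [InnerProductSpace ℝ V] [FiniteDimensional ℝ V]
    (D : V →ₗ[ℝ] V) (hDsym : ∀ u v : V, (inner ℝ (D u) v : ℝ) = inner ℝ u (D v))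
    (hDpos : ∀ u : V, 0 ≤ (inner ℝ (D u) u : ℝ))
    (δ α : ℝ) (hδ : 0 < δ) (hα : 0 < α)
    (w w' : ℝ → V) (hderiv : ∀ t ∈ Set.Icc (0 : ℝ) 1, HasDerivAt w (w' t) t)
    (heq : ∀ t ∈ Set.Ioc (0 : ℝ) 1,
      t • D (w' t) + δ • w' t + α • D (w t) = 0) :
    ∀ t ∈ Set.Icc (0 : ℝ) 1, ‖w t‖ ≤ ‖w 0‖ := by
  have hD : D.IsPositive := (D.isPositive_iff).2 ⟨hDsym, hDpos⟩
  have hdecay : ∀ t ∈ Set.Ioo (0 : ℝ) 1, inner ℝ (w' t) (w t) ≤ 0 := fun t ht ↦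
    hD.inner_nonpos_of_smul_add_smul_add_smul_eq_zero ht.1.le hδ hα.le
      (heq t (Set.Ioo_subset_Ioc_self ht))
  exact fun t ht ↦ antitoneOn_norm_of_inner_deriv_nonpos hderiv hdecay
    (Set.left_mem_Icc.2 zero_le_one) ht ht.1
end

section
/- Let D be a self-adjoint nonnegative operator on a finite-dimensional real inner product space, δ > 0, α > 0, τ > 0, σ ≥ 1/2, and let t^n = nτ, t^n_σ = σ t^{n+1} + (1−σ) t^n, w^n_σ = σ w^{n+1} + (1−σ) w^n. If vectors w^0, w^1, … satisfy the implicit two-level scheme (t^n_σ D + δ I)(w^{n+1} − w^n)/τ + α D w^n_σ = 0 for each n, then ‖w^{n+1}‖ ≤ ‖w^0‖ for all n. -/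
/-!
Multiplying the scheme by `τ` gives `(δ + a D) wⁿ⁺¹ = (δ + b D) wⁿ` with `a = tⁿ_σ + ατσ` and
`b = tⁿ_σ - ατ(1 - σ)`, so `a - b = ατ > 0`, `a ≥ 0` and `a + b = 2tⁿ_σ + ατ(2σ - 1) ≥ 0`.
Since `δ + a D` is invertible and commutes with `δ + b D`, writing `wⁿ = (δ + a D) u` gives
`wⁿ⁺¹ = (δ + b D) u`, and `‖(δ + c D) u‖²` is nondecreasing in `c` on `c ≥ |b|` because
`⟨D u, u⟩ ≥ 0`. Hence every step is a contraction.
-/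

open Real

section PositiveOperator

variable {V : Type*} [NormedAddCommGroup V] [InnerProductSpace ℝ V]
  (D : V →ₗ[ℝ] V) (hDpos : ∀ u : V, 0 ≤ (inner ℝ (D u) u : ℝ))
include hDpos

lemma norm_smul_add_smul_le {δ a b : ℝ} (hδ : 0 ≤ δ) (hba : b ≤ a) (hab : 0 ≤ a + b) (u : V) :
    ‖δ • u + b • D u‖ ≤ ‖δ • u + a • D u‖ := by
  have expand : ∀ c : ℝ, ‖δ • u + c • D u‖ ^ 2
      = δ ^ 2 * ‖u‖ ^ 2 + 2 * (δ * c) * (inner ℝ (D u) u : ℝ) + c ^ 2 * ‖D u‖ ^ 2 := by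
    intro c
    rw [norm_add_sq_real, real_inner_smul_left, real_inner_smul_right, real_inner_comm,
      norm_smul, norm_smul, Real.norm_eq_abs, Real.norm_eq_abs, mul_pow, mul_pow, sq_abs, sq_abs]
    ring
  refine (sq_le_sq₀ (norm_nonneg _) (norm_nonneg _)).mp ?_
  rw [expand, expand]
  nlinarith [mul_nonneg (mul_nonneg (sub_nonneg.2 hba) hab) (sq_nonneg ‖D u‖),
    mul_nonneg (mul_nonneg hδ (sub_nonneg.2 hba)) (hDpos u)]

lemma injective_smul_id_add_smul {δ c : ℝ} (hδ : 0 < δ) (hc : 0 ≤ c) :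
    Function.Injective (δ • (LinearMap.id : V →ₗ[ℝ] V) + c • D) := by
  rw [← LinearMap.ker_eq_bot, LinearMap.ker_eq_bot']
  intro u hu
  have hzero : δ * ‖u‖ ^ 2 + c * (inner ℝ (D u) u : ℝ) = 0 := by
    have := congrArg (fun x => (inner ℝ x u : ℝ)) hu
    simpa [inner_add_left, real_inner_smul_left, real_inner_self_eq_norm_sq] using this
  have : ‖u‖ ^ 2 = 0 := by nlinarith [mul_nonneg hc (hDpos u), sq_nonneg ‖u‖]
  simpa using this

lemma norm_le_of_smul_add_smul_eq [FiniteDimensional ℝ V] {δ a b : ℝ} (hδ : 0 < δ)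
    (ha : 0 ≤ a) (hba : b ≤ a) (hab : 0 ≤ a + b) {v₀ v₁ : V}
    (h : δ • v₁ + a • D v₁ = δ • v₀ + b • D v₀) : ‖v₁‖ ≤ ‖v₀‖ := by
  set A := δ • (LinearMap.id : V →ₗ[ℝ] V) + a • D
  have hA : Function.Injective A := injective_smul_id_add_smul D hDpos hδ ha
  obtain ⟨u, rfl⟩ : ∃ u, A u = v₀ := LinearMap.injective_iff_surjective.mp hA v₀
  have hv₁ : v₁ = δ • u + b • D u := hA <| by
    simp only [A, LinearMap.add_apply, LinearMap.smul_apply, LinearMap.id_apply, map_add,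
      map_smul] at h ⊢
    rw [h]
  rw [hv₁]
  exact norm_smul_add_smul_le D hDpos hδ.le hba hab u

end PositiveOperator

lemma smul_add_smul_eq_of_scheme {V : Type*} [AddCommGroup V] [Module ℝ V] (D : V →ₗ[ℝ] V)
    {δ α τ σ t : ℝ} (hτ : τ ≠ 0) {v₀ v₁ : V}
    (h : t • D (τ⁻¹ • (v₁ - v₀)) + δ • (τ⁻¹ • (v₁ - v₀)) + α • D (σ • v₁ + (1 - σ) • v₀) = 0) :
    δ • v₁ + (t + α * τ * σ) • D v₁ = δ • v₀ + (t - α * τ * (1 - σ)) • D v₀ := by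
  simp only [map_sub, map_add, map_smul, smul_sub, smul_add, smul_smul] at h
  linear_combination (norm := match_scalars) τ • h
  all_goals field_simp
  all_goals ring

theorem two_level_scheme_stability_general {V : Type*} [NormedAddCommGroup V]
    [InnerProductSpace ℝ V] [FiniteDimensional ℝ V]
    (D : V →ₗ[ℝ] V)
    (hDpos : ∀ u : V, 0 ≤ (inner ℝ (D u) u : ℝ))
    (δ α τ σ : ℝ) (hδ : 0 < δ) (hα : 0 < α) (hτ : 0 < τ) (hσ : 1 / 2 ≤ σ)
    (w : ℕ → V)
    (hscheme : ∀ n : ℕ,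
      (σ * ((n + 1 : ℕ) * τ) + (1 - σ) * ((n : ℕ) * τ)) •
          D (τ⁻¹ • (w (n + 1) - w n)) +
        δ • (τ⁻¹ • (w (n + 1) - w n)) +
        α • D (σ • w (n + 1) + (1 - σ) • w n) = 0) :
    ∀ n : ℕ, ‖w (n + 1)‖ ≤ ‖w 0‖ := by
  have hατ : 0 < α * τ := mul_pos hα hτ
  have hanti : Antitone (‖w ·‖) := antitone_nat_of_succ_le fun n => by
    set t := σ * ((n + 1 : ℕ) * τ) + (1 - σ) * ((n : ℕ) * τ)
    have ht : t = (n + σ) * τ := by push_cast [t]; ring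
    have ht₀ : 0 ≤ t := ht ▸ mul_nonneg (by positivity) hτ.le
    refine norm_le_of_smul_add_smul_eq D hDpos hδ (by positivity) (by nlinarith) ?_
      (smul_add_smul_eq_of_scheme D hτ.ne' (hscheme n))
    nlinarith
  exact fun n => hanti (Nat.zero_le _)

theorem two_level_scheme_stability {V : Type*} [NormedAddCommGroup V]
    [InnerProductSpace ℝ V] [FiniteDimensional ℝ V]
    (D : V →ₗ[ℝ] V) (hDsym : ∀ u v : V, (inner ℝ (D u) v : ℝ) = inner ℝ u (D v))
    (hDpos : ∀ u : V, 0 ≤ (inner ℝ (D u) u : ℝ))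
    (δ α τ σ : ℝ) (hδ : 0 < δ) (hα : 0 < α) (hτ : 0 < τ) (hσ : 1 / 2 ≤ σ)
    (w : ℕ → V)
    (hscheme : ∀ n : ℕ,
      (σ * ((n + 1 : ℕ) * τ) + (1 - σ) * ((n : ℕ) * τ)) •
          D (τ⁻¹ • (w (n + 1) - w n)) +
        δ • (τ⁻¹ • (w (n + 1) - w n)) +
        α • D (σ • w (n + 1) + (1 - σ) • w n) = 0) :
    ∀ n : ℕ, ‖w (n + 1)‖ ≤ ‖w 0‖ :=
  two_level_scheme_stability_general D hDpos δ α τ σ hδ hα hτ hσ w hscheme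
end

section
/- Let D be a self-adjoint nonnegative operator, δ > 0, α > 0, τ > 0, σ ≥ 1/2, and suppose δ (w^{n+1} − w^n)/τ + D(α w^n_σ + t^n_σ (w^{n+1} − w^n)/τ) = 0 with t^n_σ ≥ 0 and w^n_σ = σ w^{n+1} + (1−σ) w^n. Then ⟨(w^{n+1} − w^n)/τ, w^n_σ⟩ ≤ 0. -/
/-!
Pairing the scheme `δ • v + D u = 0` with `u = α • w + t • v` gives
`0 = δ α ⟪v, w⟫ + δ t ‖v‖² + ⟪D u, u⟫`, and the last two terms are nonnegative.
-/

open scoped InnerProductSpace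

theorem inner_smul_add_apply_test_eq {V : Type*} [NormedAddCommGroup V] [InnerProductSpace ℝ V]
    (D : V →ₗ[ℝ] V) (δ α t : ℝ) (v w : V) :
    ⟪δ • v + D (α • w + t • v), α • w + t • v⟫_ℝ =
      δ * α * ⟪v, w⟫_ℝ + δ * t * ⟪v, v⟫_ℝ + ⟪D (α • w + t • v), α • w + t • v⟫_ℝ := by
  simp only [inner_add_left, inner_add_right, real_inner_smul_left, real_inner_smul_right]
  ring

theorem inner_nonpos_of_smul_add_apply_eq_zero {V : Type*} [NormedAddCommGroup V]
    [InnerProductSpace ℝ V] (D : V →ₗ[ℝ] V) (hD : ∀ u : V, 0 ≤ ⟪D u, u⟫_ℝ)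
    {δ α t : ℝ} (hδ : 0 < δ) (hα : 0 < α) (ht : 0 ≤ t) {v w : V}
    (h : δ • v + D (α • w + t • v) = 0) : ⟪v, w⟫_ℝ ≤ 0 := by
  have henergy := inner_smul_add_apply_test_eq D δ α t v w
  rw [h, inner_zero_left] at henergy
  have hv : 0 ≤ δ * t * ⟪v, v⟫_ℝ := mul_nonneg (mul_nonneg hδ.le ht) real_inner_self_nonneg
  have hvw : δ * α * ⟪v, w⟫_ℝ ≤ 0 := by linarith [hD (α • w + t • v)]
  exact nonpos_of_mul_nonpos_right hvw (mul_pos hδ hα)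

theorem two_level_scheme_key_inequality_general {V : Type*} [NormedAddCommGroup V]
    [InnerProductSpace ℝ V]
    (D : V →ₗ[ℝ] V)
    (hDpos : ∀ u : V, 0 ≤ (inner ℝ (D u) u : ℝ))
    (δ α τ σ tσ : ℝ) (hδ : 0 < δ) (hα : 0 < α)
    (htσ : 0 ≤ tσ) (wn wn1 : V)
    (hscheme : δ • (τ⁻¹ • (wn1 - wn)) +
        D (α • (σ • wn1 + (1 - σ) • wn) + tσ • (τ⁻¹ • (wn1 - wn))) = 0) :
    (inner ℝ (τ⁻¹ • (wn1 - wn)) (σ • wn1 + (1 - σ) • wn) : ℝ) ≤ 0 :=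
  inner_nonpos_of_smul_add_apply_eq_zero D hDpos hδ hα htσ hscheme

theorem two_level_scheme_key_inequality {V : Type*} [NormedAddCommGroup V]
    [InnerProductSpace ℝ V] [FiniteDimensional ℝ V]
    (D : V →ₗ[ℝ] V) (hDsym : ∀ u v : V, (inner ℝ (D u) v : ℝ) = inner ℝ u (D v))
    (hDpos : ∀ u : V, 0 ≤ (inner ℝ (D u) u : ℝ))
    (δ α τ σ tσ : ℝ) (hδ : 0 < δ) (hα : 0 < α) (hτ : 0 < τ) (hσ : 1 / 2 ≤ σ)
    (htσ : 0 ≤ tσ) (wn wn1 : V)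
    (hscheme : δ • (τ⁻¹ • (wn1 - wn)) +
        D (α • (σ • wn1 + (1 - σ) • wn) + tσ • (τ⁻¹ • (wn1 - wn))) = 0) :
    (inner ℝ (τ⁻¹ • (wn1 - wn)) (σ • wn1 + (1 - σ) • wn) : ℝ) ≤ 0 :=
  two_level_scheme_key_inequality_general D hDpos δ α τ σ tσ hδ hα htσ wn wn1 hscheme
end

section
/- For λ ≥ δ > 0, α ∈ (0,1), M ∈ ℕ, η = M^{-1/2}, and nodes s_m = mη for m = −M,…,M, define the quadrature approximation Q_M(λ) = 2η (sin(πα)/π) Σ_{m=−M}^{M} e^{2α s_m} (1 + e^{2 s_m} λ)^{-1}. Then 0 < Q_M(λ), and Q_M(λ) is a Riemann-sum approximation of λ^{-α} = 2(sin(πα)/π) ∫_{−∞}^{∞} e^{2αs}(1+e^{2s}λ)^{-1} ds in the sense that |Q_M(λ) − λ^{-α}| → 0 as M → ∞. -/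
open Real Filter

/-- The sinc/rectangle quadrature approximation of
`λ^(-α) = 2 (sin(πα)/π) ∫_ℝ e^{2αs}(1+e^{2s}λ)^{-1} ds`
with step `η = M^{-1/2}` and nodes `s_m = mη`, `m = -M, …, M`. -/
noncomputable def sincQuad (α lam : ℝ) (M : ℕ) : ℝ :=
  2 * ((M : ℝ) ^ (-(1 / 2 : ℝ))) * (Real.sin (Real.pi * α) / Real.pi) *
    ∑ m ∈ Finset.Icc (-(M : ℤ)) M,
      Real.exp (2 * α * ((m : ℝ) * (M : ℝ) ^ (-(1 / 2 : ℝ)))) *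
        (1 + Real.exp (2 * ((m : ℝ) * (M : ℝ) ^ (-(1 / 2 : ℝ)))) * lam)⁻¹

/-!
Substituting `u = λe^{2s} / (1 + λe^{2s})` turns `∫_ℝ e^{2αs} (1 + e^{2s}λ)⁻¹ ds` into
`λ^{-α} B(α, 1 - α) / 2 = λ^{-α} π / (2 sin πα)`, and `Q_M(λ)` is `2 sin(πα)/π` times a
rectangle-rule sum for this integral with step `η = M^{-1/2}` over `[-√M, √M + η]`.
On a cell of width `η` the rectangle rule errs by at most `η` times the integral of `|f'|` over
the cell, so the total error is at most `η ‖f'‖₁ → 0`; meanwhile the truncated integrals tend to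
the full one because `√M → ∞`.
-/

open MeasureTheory Set
open scoped Interval Topology

section RectangleRule

variable {E : Type*} [NormedAddCommGroup E] [NormedSpace ℝ E] [CompleteSpace E]
  {f f' : ℝ → E}

theorem norm_smul_sub_intervalIntegral_le (hf : ∀ x, HasDerivAt f (f' x) x)
    (hf' : Integrable f') (a : ℝ) {η : ℝ} (hη : 0 ≤ η) :
    ‖η • f a - ∫ x in a..a + η, f x‖ ≤ η * ∫ x in a..a + η, ‖f' x‖ := by
  have hab : a ≤ a + η := le_add_of_nonneg_right hη
  have hcont : Continuous f := continuous_iff_continuousAt.2 fun x => (hf x).continuousAt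
  have hosc : ∀ x ∈ Ι a (a + η), ‖f a - f x‖ ≤ ∫ t in a..a + η, ‖f' t‖ := by
    intro x hx
    rw [uIoc_of_le hab] at hx
    rw [norm_sub_rev, ← intervalIntegral.integral_eq_sub_of_hasDerivAt (fun t _ => hf t)
      hf'.intervalIntegrable]
    calc ‖∫ t in a..x, f' t‖ ≤ ∫ t in a..x, ‖f' t‖ :=
          intervalIntegral.norm_integral_le_integral_norm hx.1.le
      _ ≤ ∫ t in a..a + η, ‖f' t‖ :=
          intervalIntegral.integral_mono_interval le_rfl hx.1.le hx.2
            (Eventually.of_forall fun t => norm_nonneg _) hf'.norm.intervalIntegrable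
  have hconst : η • f a = ∫ _ in a..a + η, f a := by simp
  rw [hconst, ← intervalIntegral.integral_sub intervalIntegrable_const
    (hcont.intervalIntegrable _ _)]
  simpa [abs_of_nonneg hη, mul_comm] using intervalIntegral.norm_integral_le_of_norm_le_const hosc

theorem norm_riemannSum_sub_intervalIntegral_le (hf : ∀ x, HasDerivAt f (f' x) x)
    (hf' : Integrable f') (a : ℝ) {η : ℝ} (hη : 0 ≤ η) (n : ℕ) :
    ‖η • ∑ k ∈ Finset.range n, f (a + k * η) - ∫ x in a..a + n * η, f x‖ ≤ η * ∫ x, ‖f' x‖ := by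
  have hcont : Continuous f := continuous_iff_continuousAt.2 fun x => (hf x).continuousAt
  set p : ℕ → ℝ := fun k => a + k * η
  have hp : ∀ k, p (k + 1) = p k + η := fun k => by simp only [p]; push_cast; ring
  have hsplit : ∫ x in a..a + n * η, f x = ∑ k ∈ Finset.range n, ∫ x in p k..p (k + 1), f x := by
    rw [intervalIntegral.sum_integral_adjacent_intervals fun k _ => hcont.intervalIntegrable _ _]
    simp [p]
  have hsplit' :
      ∫ x in a..a + n * η, ‖f' x‖ = ∑ k ∈ Finset.range n, ∫ x in p k..p (k + 1), ‖f' x‖ := by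
    rw [intervalIntegral.sum_integral_adjacent_intervals
      fun k _ => hf'.norm.intervalIntegrable]
    simp [p]
  calc ‖η • ∑ k ∈ Finset.range n, f (a + k * η) - ∫ x in a..a + n * η, f x‖
      = ‖∑ k ∈ Finset.range n, (η • f (p k) - ∫ x in p k..p k + η, f x)‖ := by
        simp only [hsplit, hp, Finset.smul_sum, Finset.sum_sub_distrib, p]
    _ ≤ ∑ k ∈ Finset.range n, η * ∫ x in p k..p k + η, ‖f' x‖ :=
        norm_sum_le_of_le _ fun k _ => norm_smul_sub_intervalIntegral_le hf hf' (p k) hη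
    _ = η * ∫ x in a..a + n * η, ‖f' x‖ := by simp only [hsplit', hp, Finset.mul_sum]
    _ ≤ η * ∫ x, ‖f' x‖ := by
        gcongr
        rw [intervalIntegral.integral_of_le (le_add_of_nonneg_right (by positivity))]
        exact setIntegral_le_integral hf'.norm (Eventually.of_forall fun x => norm_nonneg _)

theorem tendsto_riemannSum_integral {ι : Type*} {l : Filter ι} [l.IsCountablyGenerated]
    (hf : ∀ x, HasDerivAt f (f' x) x) (hfi : Integrable f) (hf' : Integrable f')
    {a η : ι → ℝ} {N : ι → ℕ} (hη0 : ∀ i, 0 ≤ η i) (hη : Tendsto η l (𝓝 0))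
    (ha : Tendsto a l atBot) (hb : Tendsto (fun i => a i + N i * η i) l atTop) :
    Tendsto (fun i => η i • ∑ k ∈ Finset.range (N i), f (a i + k * η i)) l (𝓝 (∫ x, f x)) := by
  have herr : Tendsto (fun i => η i • ∑ k ∈ Finset.range (N i), f (a i + k * η i) -
      ∫ x in a i..a i + N i * η i, f x) l (𝓝 0) :=
    squeeze_zero_norm (fun i => norm_riemannSum_sub_intervalIntegral_le hf hf' _ (hη0 i) _)
      (by simpa using hη.mul_const (∫ x, ‖f' x‖))
  simpa using herr.add (intervalIntegral_tendsto_integral hfi ha hb)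

end RectangleRule

theorem Finset.sum_Icc_neg_eq_sum_range {β : Type*} [AddCommMonoid β] (F : ℤ → β) (M : ℕ) :
    ∑ m ∈ Finset.Icc (-(M : ℤ)) M, F m = ∑ k ∈ Finset.range (2 * M + 1), F (k - M) := by
  refine Finset.sum_nbij' (fun m => (m + M).toNat) (fun k => k - M) ?_ ?_ ?_ ?_ ?_ <;>
    intro m hm <;> simp only [Finset.mem_Icc, Finset.mem_range] at hm ⊢ <;>
    first | omega | (congr 1; omega)

theorem tendsto_natCast_mul_rpow_neg_half :
    Tendsto (fun M : ℕ => (M : ℝ) * (M : ℝ) ^ (-(1 / 2 : ℝ))) atTop atTop := by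
  refine ((tendsto_rpow_atTop (by norm_num : (0 : ℝ) < 1 / 2)).comp
    tendsto_natCast_atTop_atTop).congr fun M => ?_
  rw [Function.comp_apply, ← rpow_one_add' (Nat.cast_nonneg M) (by norm_num)]
  norm_num

theorem integral_rpow_mul_one_sub_rpow_neg {α : ℝ} (hα0 : 0 < α) (hα1 : α < 1) :
    ∫ u in Ioo (0 : ℝ) 1, u ^ (α - 1) * (1 - u) ^ (-α) = π / sin (π * α) := by
  have hcast : Complex.betaIntegral α (1 - α) =
      ((∫ u in (0 : ℝ)..1, u ^ (α - 1) * (1 - u) ^ (-α) : ℝ) : ℂ) := by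
    rw [Complex.betaIntegral, ← intervalIntegral.integral_ofReal]
    refine intervalIntegral.integral_congr fun u hu => ?_
    rw [uIcc_of_le zero_le_one] at hu
    push_cast [Complex.ofReal_cpow hu.1, Complex.ofReal_cpow (sub_nonneg.2 hu.2)]
    ring_nf
  have hbeta := ProbabilityTheory.beta_eq_betaIntegralReal α (1 - α) hα0 (by linarith)
  rw [ProbabilityTheory.beta, add_sub_cancel, Real.Gamma_one, div_one,
    Real.Gamma_mul_Gamma_one_sub, Complex.ofReal_sub, Complex.ofReal_one, hcast,
    Complex.ofReal_re] at hbeta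
  rw [hbeta, intervalIntegral.integral_of_le zero_le_one, integral_Ioc_eq_integral_Ioo]

theorem sin_pi_mul_pos {α : ℝ} (hα0 : 0 < α) (hα1 : α < 1) : 0 < sin (π * α) :=
  sin_pos_of_pos_of_lt_pi (by positivity) (by nlinarith [pi_pos])

noncomputable def sincIntegrand (α lam s : ℝ) : ℝ :=
  exp (2 * α * s) * (1 + exp (2 * s) * lam)⁻¹

section SincIntegrand

variable {α lam : ℝ}

theorem hasDerivAt_exp_two_mul_div (hlam : 0 < lam) (s : ℝ) :
    HasDerivAt (fun s => exp (2 * s) * lam / (1 + exp (2 * s) * lam))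
      (2 * (exp (2 * s) * lam) / (1 + exp (2 * s) * lam) ^ 2) s := by
  have ht : HasDerivAt (fun s => exp (2 * s) * lam) (2 * (exp (2 * s) * lam)) s := by
    simpa [mul_comm, mul_left_comm, mul_assoc] using
      (((hasDerivAt_id s).const_mul 2).exp).mul_const lam
  refine (ht.div (ht.const_add 1) (by positivity)).congr_deriv ?_
  ring

theorem image_exp_two_mul_div (hlam : 0 < lam) :
    (fun s => exp (2 * s) * lam / (1 + exp (2 * s) * lam)) '' univ = Ioo 0 1 := by
  ext u
  simp only [image_univ, mem_range, mem_Ioo]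
  constructor
  · rintro ⟨s, rfl⟩
    have ht : 0 < exp (2 * s) * lam := by positivity
    exact ⟨by positivity, (div_lt_one (by positivity)).2 (by linarith)⟩
  · rintro ⟨hu0, hu1⟩
    refine ⟨log (u / ((1 - u) * lam)) / 2, ?_⟩
    have h1u : 0 < 1 - u := by linarith
    rw [mul_div_cancel₀ _ two_ne_zero, exp_log (by positivity)]
    field_simp
    ring

theorem injective_exp_two_mul_div (hlam : 0 < lam) :
    Function.Injective fun s => exp (2 * s) * lam / (1 + exp (2 * s) * lam) := by
  intro s t hst
  rw [div_eq_div_iff (by positivity) (by positivity)] at hst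
  have : exp (2 * s) * lam = exp (2 * t) * lam := by linarith
  rw [mul_left_inj' hlam.ne', exp_eq_exp] at this
  linarith

theorem abs_deriv_smul_beta_integrand (hlam : 0 < lam) (α s : ℝ) :
    |2 * (exp (2 * s) * lam) / (1 + exp (2 * s) * lam) ^ 2| •
      ((exp (2 * s) * lam / (1 + exp (2 * s) * lam)) ^ (α - 1) *
        (1 - exp (2 * s) * lam / (1 + exp (2 * s) * lam)) ^ (-α)) =
      2 * lam ^ α * sincIntegrand α lam s := by
  set t := exp (2 * s) * lam with ht
  have ht0 : 0 < t := by positivity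
  have h1t : 1 - t / (1 + t) = (1 + t)⁻¹ := by field_simp; ring
  have htα : t ^ α = lam ^ α * exp (2 * α * s) := by
    rw [ht, mul_rpow (exp_pos _).le hlam.le, ← exp_mul]; ring_nf
  rw [smul_eq_mul, abs_of_pos (by positivity), h1t, div_rpow ht0.le (by positivity),
    inv_rpow (by positivity), rpow_neg (by positivity), inv_inv, rpow_sub_one ht0.ne',
    rpow_sub_one (by positivity : (0 : ℝ) < 1 + t).ne', sincIntegrand, ← ht]
  field_simp
  rw [htα]

theorem rpow_neg_eq_integral_sincIntegrand (hlam : 0 < lam) (hα0 : 0 < α) (hα1 : α < 1) :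
    lam ^ (-α) = 2 * sin (π * α) / π * ∫ s, sincIntegrand α lam s := by
  have h := integral_image_eq_integral_abs_deriv_smul MeasurableSet.univ
    (fun s _ => (hasDerivAt_exp_two_mul_div hlam s).hasDerivWithinAt)
    (injective_exp_two_mul_div hlam).injOn fun u => u ^ (α - 1) * (1 - u) ^ (-α)
  simp only [image_exp_two_mul_div hlam, integral_rpow_mul_one_sub_rpow_neg hα0 hα1,
    abs_deriv_smul_beta_integrand hlam, Measure.restrict_univ, integral_const_mul] at h
  rw [div_eq_iff (sin_pi_mul_pos hα0 hα1).ne'] at h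
  rw [rpow_neg hlam.le]
  field_simp
  linear_combination h

theorem sincIntegrand_pos (hlam : 0 < lam) (s : ℝ) : 0 < sincIntegrand α lam s := by
  unfold sincIntegrand
  positivity

theorem integrable_sincIntegrand (hlam : 0 < lam) (hα0 : 0 < α) (hα1 : α < 1) :
    Integrable (sincIntegrand α lam) := by
  -- A non-integrable function has Bochner integral `0`, while `lam ^ (-α) ≠ 0`.
  refine .of_integral_ne_zero fun h => ?_
  have := rpow_neg_eq_integral_sincIntegrand hlam hα0 hα1
  rw [h, mul_zero] at this
  exact (rpow_pos_of_pos hlam _).ne' this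

theorem hasDerivAt_sincIntegrand (hlam : 0 < lam) (s : ℝ) :
    HasDerivAt (sincIntegrand α lam) (sincIntegrand α lam s *
      (2 * α - 2 * (exp (2 * s) * lam / (1 + exp (2 * s) * lam)))) s := by
  have hnum : HasDerivAt (fun s => exp (2 * α * s)) (2 * α * exp (2 * α * s)) s := by
    simpa [mul_comm] using ((hasDerivAt_id s).const_mul (2 * α)).exp
  have hden : HasDerivAt (fun s => 1 + exp (2 * s) * lam) (2 * (exp (2 * s) * lam)) s := by
    simpa [mul_comm, mul_left_comm, mul_assoc] using
      ((((hasDerivAt_id s).const_mul 2).exp).mul_const lam).const_add 1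
  refine (hnum.mul (hden.inv (by positivity))).congr_deriv ?_
  simp only [sincIntegrand, Pi.inv_apply]
  field_simp
  ring

theorem integrable_deriv_sincIntegrand (hlam : 0 < lam) (hα0 : 0 < α) (hα1 : α < 1) :
    Integrable fun s => sincIntegrand α lam s *
      (2 * α - 2 * (exp (2 * s) * lam / (1 + exp (2 * s) * lam))) := by
  refine ((integrable_sincIntegrand hlam hα0 hα1).const_mul 2).mono'
    (by unfold sincIntegrand; fun_prop) (Eventually.of_forall fun s => ?_)
  have ht : 0 < exp (2 * s) * lam := by positivity
  have hψ0 : 0 ≤ exp (2 * s) * lam / (1 + exp (2 * s) * lam) := by positivity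
  have hψ1 : exp (2 * s) * lam / (1 + exp (2 * s) * lam) ≤ 1 :=
    (div_le_one (by positivity)).2 (by linarith)
  rw [norm_mul, Real.norm_of_nonneg (sincIntegrand_pos hlam s).le, mul_comm]
  refine mul_le_mul_of_nonneg_right ?_ (sincIntegrand_pos hlam s).le
  rw [Real.norm_eq_abs, abs_le]
  constructor <;> linarith

end SincIntegrand

theorem sincQuad_eq_riemannSum (α lam : ℝ) (M : ℕ) :
    sincQuad α lam M = 2 * sin (π * α) / π * ((M : ℝ) ^ (-(1 / 2 : ℝ)) •
      ∑ k ∈ Finset.range (2 * M + 1), sincIntegrand α lam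
        (-((M : ℝ) * (M : ℝ) ^ (-(1 / 2 : ℝ))) + k * (M : ℝ) ^ (-(1 / 2 : ℝ)))) := by
  change 2 * _ * _ * ∑ m ∈ Finset.Icc (-(M : ℤ)) M,
    sincIntegrand α lam (m * (M : ℝ) ^ (-(1 / 2 : ℝ))) = _
  rw [Finset.sum_Icc_neg_eq_sum_range (fun m : ℤ => sincIntegrand α lam (m * _)), smul_eq_mul]
  push_cast [sub_eq_neg_add, add_mul, neg_mul]
  ring

theorem sincQuad_pos {α lam : ℝ} (hlam : 0 < lam) (hα0 : 0 < α) (hα1 : α < 1) {M : ℕ}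
    (hM : 0 < M) : 0 < sincQuad α lam M := by
  have := sin_pi_mul_pos hα0 hα1
  rw [sincQuad_eq_riemannSum, smul_eq_mul]
  exact mul_pos (by positivity) (mul_pos (rpow_pos_of_pos (Nat.cast_pos.2 hM) _)
    (Finset.sum_pos (fun k _ => sincIntegrand_pos hlam _) Finset.nonempty_range_add_one))

theorem tendsto_sincQuad {α lam : ℝ} (hlam : 0 < lam) (hα0 : 0 < α) (hα1 : α < 1) :
    Tendsto (sincQuad α lam) atTop (𝓝 (lam ^ (-α))) := by
  have hη : Tendsto (fun M : ℕ => (M : ℝ) ^ (-(1 / 2 : ℝ))) atTop (𝓝 0) :=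
    (tendsto_rpow_neg_atTop (by norm_num)).comp tendsto_natCast_atTop_atTop
  have hb : Tendsto (fun M : ℕ => -((M : ℝ) * (M : ℝ) ^ (-(1 / 2 : ℝ))) +
      ((2 * M + 1 : ℕ) : ℝ) * (M : ℝ) ^ (-(1 / 2 : ℝ))) atTop atTop := by
    refine tendsto_atTop_mono (fun M => ?_) tendsto_natCast_mul_rpow_neg_half
    have := rpow_nonneg (Nat.cast_nonneg M) (-(1 / 2 : ℝ))
    push_cast
    nlinarith
  have hR := tendsto_riemannSum_integral (hasDerivAt_sincIntegrand hlam)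
    (integrable_sincIntegrand hlam hα0 hα1) (integrable_deriv_sincIntegrand hlam hα0 hα1)
    (fun M => rpow_nonneg (Nat.cast_nonneg M) _) hη
    (tendsto_neg_atTop_atBot.comp tendsto_natCast_mul_rpow_neg_half) hb
  rw [rpow_neg_eq_integral_sincIntegrand hlam hα0 hα1]
  exact (hR.const_mul _).congr fun M => (sincQuad_eq_riemannSum α lam M).symm

theorem sinc_quadrature_positive_and_convergent (lam δ α : ℝ) (hδ : 0 < δ)
    (hlam : δ ≤ lam) (hα0 : 0 < α) (hα1 : α < 1) :
    (∀ M : ℕ, 0 < M → 0 < sincQuad α lam M) ∧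
      Tendsto (fun M : ℕ => |sincQuad α lam M - lam ^ (-α)|) atTop (nhds 0) := by
  have hlam0 : 0 < lam := hδ.trans_le hlam
  refine ⟨fun M hM => sincQuad_pos hlam0 hα0 hα1 hM, ?_⟩
  simpa only [Real.norm_eq_abs] using
    tendsto_iff_norm_sub_tendsto_zero.1 (tendsto_sincQuad hlam0 hα0 hα1)
end

section
/- Let D be self-adjoint nonnegative on a finite-dimensional real inner product space, δ > 0, α ∈ (0,1), and let w solve (tD + δI)w'(t) + αDw(t) = 0 on (0,1] with w(0) = δ^{-α} g. Then w(1) = S^{-α} g where S = D + δI; i.e., the value at pseudo-time t = 1 of the Cauchy problem solves S^α w(1) = g. -/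
/-!
Expand everything in the eigenbasis `ψ`. The coordinate `c = ⟪ψ j, w⟫` solves the scalar
equation `(t μ + δ) c' + α μ c = 0`, for which `(t μ + δ) ^ α` is an integrating factor:
`(t μ + δ) ^ α * c t` is constant on `[0, 1]`. Comparing `t = 0` with `t = 1` gives
`c 1 = (μ + δ) ^ (-α) * δ ^ α * c 0 = (μ + δ) ^ (-α) * ⟪ψ j, g⟫`.
-/

open Real Set

theorem OrthonormalBasis.inner_map_eq_mul_of_apply_eq_smul {V ι : Type*} [NormedAddCommGroup V]
    [InnerProductSpace ℝ V] [Fintype ι] (ψ : OrthonormalBasis ι ℝ V) {μ : ι → ℝ}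
    {D : V →ₗ[ℝ] V} (hDψ : ∀ j, D (ψ j) = μ j • ψ j) (j : ι) (v : V) :
    inner ℝ (ψ j) (D v) = μ j * inner ℝ (ψ j) v := by
  classical
  let lhs : V →ₗ[ℝ] ℝ := (innerₛₗ ℝ (ψ j)).comp D
  let rhs : V →ₗ[ℝ] ℝ := μ j • innerₛₗ ℝ (ψ j)
  suffices lhs = rhs from LinearMap.congr_fun this v
  refine ψ.toBasis.ext fun k => ?_
  simp only [lhs, rhs, LinearMap.comp_apply, LinearMap.smul_apply, innerₛₗ_apply_apply,
    OrthonormalBasis.coe_toBasis, hDψ, real_inner_smul_right,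
    orthonormal_iff_ite.mp ψ.orthonormal, smul_eq_mul]
  split_ifs with h <;> simp [h]

theorem hasDerivAt_affine_rpow_mul {c : ℝ → ℝ} {c' m δ α t : ℝ} (hpos : 0 < t * m + δ)
    (hc : HasDerivAt c c' t) :
    HasDerivAt (fun s => (s * m + δ) ^ α * c s)
      ((t * m + δ) ^ (α - 1) * ((t * m + δ) * c' + α * m * c t)) t := by
  have haffine : HasDerivAt (fun s : ℝ => s * m + δ) m t := by
    simpa using ((hasDerivAt_id t).mul_const m).add_const δ
  refine ((haffine.rpow_const (p := α) (Or.inl hpos.ne')).mul hc).congr_deriv ?_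
  have hsplit : (t * m + δ) ^ α = (t * m + δ) ^ (α - 1) * (t * m + δ) := by
    rw [← Real.rpow_add_one hpos.ne', sub_add_cancel]
  rw [hsplit]
  ring

theorem affine_rpow_mul_eq_of_ode {c c' : ℝ → ℝ} {m δ α : ℝ} (hm : 0 ≤ m) (hδ : 0 < δ)
    (hcont : ContinuousOn c (Icc 0 1)) (hc : ∀ t ∈ Ioo 0 1, HasDerivAt c (c' t) t)
    (hode : ∀ t ∈ Ioo 0 1, (t * m + δ) * c' t + α * m * c t = 0) :
    (m + δ) ^ α * c 1 = δ ^ α * c 0 := by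
  have hpos : ∀ t ∈ Icc (0 : ℝ) 1, 0 < t * m + δ := fun t ht => by
    nlinarith [mul_nonneg ht.1 hm]
  have hφcont : ContinuousOn (fun s => (s * m + δ) ^ α * c s) (Icc 0 1) :=
    ((ContinuousOn.rpow_const (by fun_prop) fun t ht => Or.inl (hpos t ht).ne').mul hcont)
  obtain ⟨t, ht, hslope⟩ := exists_hasDerivAt_eq_slope _ (fun _ => 0) zero_lt_one hφcont
    fun t ht => by
      simpa [hode t ht] using
        hasDerivAt_affine_rpow_mul (α := α) (hpos t (Ioo_subset_Icc_self ht)) (hc t ht)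
  simp only [zero_mul, zero_add, one_mul, sub_zero, div_one] at hslope
  linarith

theorem OrthonormalBasis.inner_eq_rpow_mul_of_pseudoParabolic {V ι : Type*}
    [NormedAddCommGroup V] [InnerProductSpace ℝ V] [Fintype ι]
    (ψ : OrthonormalBasis ι ℝ V) {μ : ι → ℝ} {D : V →ₗ[ℝ] V} (hDψ : ∀ j, D (ψ j) = μ j • ψ j)
    {δ α : ℝ} (hδ : 0 < δ) {g : V} {w w' : ℝ → V}
    (hderiv : ∀ t ∈ Icc (0 : ℝ) 1, HasDerivAt w (w' t) t)
    (heq : ∀ t ∈ Ioc (0 : ℝ) 1, t • D (w' t) + δ • w' t + α • D (w t) = 0)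
    (hinit : w 0 = δ ^ (-α) • g) (j : ι) (hμ : 0 ≤ μ j) :
    inner ℝ (ψ j) (w 1) = (μ j + δ) ^ (-α) * inner ℝ (ψ j) g := by
  have hc : ∀ t ∈ Icc (0 : ℝ) 1,
      HasDerivAt (fun s => inner ℝ (ψ j) (w s)) (inner ℝ (ψ j) (w' t)) t := fun t ht =>
    (innerSL ℝ (ψ j)).hasFDerivAt.comp_hasDerivAt t (hderiv t ht)
  have hode : ∀ t ∈ Ioo (0 : ℝ) 1, (t * μ j + δ) * inner ℝ (ψ j) (w' t)
      + α * μ j * inner ℝ (ψ j) (w t) = 0 := fun t ht => by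
    have h := congrArg (inner ℝ (ψ j)) (heq t (Ioo_subset_Ioc_self ht))
    simp only [inner_add_right, real_inner_smul_right, inner_zero_right,
      ψ.inner_map_eq_mul_of_apply_eq_smul hDψ] at h
    linear_combination h
  have hconst := affine_rpow_mul_eq_of_ode hμ hδ
    (fun t ht => (hc t ht).continuousAt.continuousWithinAt)
    (fun t ht => hc t (Ioo_subset_Icc_self ht)) hode
  have hpos : 0 < μ j + δ := by linarith
  rw [hinit, real_inner_smul_right, ← mul_assoc, ← Real.rpow_add hδ, add_neg_cancel,
    Real.rpow_zero, one_mul] at hconst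
  rw [← hconst, Real.rpow_neg hpos.le, inv_mul_cancel_left₀ (Real.rpow_pos_of_pos hpos α).ne']

theorem cauchy_problem_solves_fractional_equation_general {V : Type*} [NormedAddCommGroup V]
    [InnerProductSpace ℝ V] {n : ℕ}
    (ψ : OrthonormalBasis (Fin n) ℝ V) (μ : Fin n → ℝ) (D : V →ₗ[ℝ] V)
    (hDψ : ∀ j, D (ψ j) = μ j • ψ j) (hμ : ∀ j, 0 ≤ μ j)
    (δ α : ℝ) (hδ : 0 < δ) (g : V)
    (w w' : ℝ → V)
    (hderiv : ∀ t ∈ Set.Icc (0 : ℝ) 1, HasDerivAt w (w' t) t)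
    (heq : ∀ t ∈ Set.Ioc (0 : ℝ) 1,
      t • D (w' t) + δ • w' t + α • D (w t) = 0)
    (hinit : w 0 = δ ^ (-α) • g) :
    -- w(1) = S^(-α) g with S = D + δI, via the spectral calculus
    w 1 = ∑ j, ((μ j + δ) ^ (-α) * (inner ℝ g (ψ j) : ℝ)) • ψ j := by
  conv_lhs => rw [← ψ.sum_repr' (w 1)]
  refine Finset.sum_congr rfl fun j _ => ?_
  rw [ψ.inner_eq_rpow_mul_of_pseudoParabolic hDψ hδ hderiv heq hinit j (hμ j),
    real_inner_comm (ψ j) g]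

theorem cauchy_problem_solves_fractional_equation {V : Type*} [NormedAddCommGroup V]
    [InnerProductSpace ℝ V] [FiniteDimensional ℝ V] {n : ℕ}
    (ψ : OrthonormalBasis (Fin n) ℝ V) (μ : Fin n → ℝ) (D : V →ₗ[ℝ] V)
    (hDψ : ∀ j, D (ψ j) = μ j • ψ j) (hμ : ∀ j, 0 ≤ μ j)
    (δ α : ℝ) (hδ : 0 < δ) (hα0 : 0 < α) (hα1 : α < 1) (g : V)
    (w w' : ℝ → V)
    (hderiv : ∀ t ∈ Set.Icc (0 : ℝ) 1, HasDerivAt w (w' t) t)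
    (heq : ∀ t ∈ Set.Ioc (0 : ℝ) 1,
      t • D (w' t) + δ • w' t + α • D (w t) = 0)
    (hinit : w 0 = δ ^ (-α) • g) :
    -- w(1) = S^(-α) g with S = D + δI, via the spectral calculus
    w 1 = ∑ j, ((μ j + δ) ^ (-α) * (inner ℝ g (ψ j) : ℝ)) • ψ j :=
  cauchy_problem_solves_fractional_equation_general ψ μ D hDψ hμ δ α hδ g w w' hderiv heq hinit
end

section
/- For λ ≥ 0, δ > 0, α ∈ (0,1), the scalar two-level scheme values φ^n defined by φ^0 = 1 and (t^n_σ λ + δ)(φ^{n+1} − φ^n)/τ + αλ(σφ^{n+1} + (1−σ)φ^n) = 0 with σ ≥ 1/2, τ = 1/N, t^n = nτ, t^n_σ = σt^{n+1} + (1−σ)t^n, satisfy |φ^{n+1}| ≤ 1 for all n = 0,…,N−1. -/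
open Real

theorem scalar_two_level_scheme_stability (lam δ α σ : ℝ) (N : ℕ)
    (hlam : 0 ≤ lam) (hδ : 0 < δ) (hα0 : 0 < α) (hα1 : α < 1)
    (hσ : 1 / 2 ≤ σ) (hN : 0 < N) (τ : ℝ) (hτ : τ = 1 / (N : ℝ))
    (φ : ℕ → ℝ) (hφ0 : φ 0 = 1)
    (hscheme : ∀ n : ℕ, n < N →
      ((σ * ((n + 1 : ℕ) * τ) + (1 - σ) * ((n : ℕ) * τ)) * lam + δ) *
          ((φ (n + 1) - φ n) / τ) +
        α * lam * (σ * φ (n + 1) + (1 - σ) * φ n) = 0) :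
    ∀ n : ℕ, n < N → |φ (n + 1)| ≤ 1 := by
  have hNpos : (0 : ℝ) < (N : ℝ) := by exact_mod_cast hN
  have hτpos : 0 < τ := by rw [hτ]; positivity
  have hσ0 : 0 < σ := lt_of_lt_of_le (by norm_num) hσ
  have key : ∀ n : ℕ, n ≤ N → |φ n| ≤ 1 := by
    intro n
    induction n with
    | zero => intro _; simp [hφ0]
    | succ n ih =>
      intro hn
      have hnN : n < N := hn
      have ihn := ih (le_of_lt hnN)
      have hs := hscheme n hnN
      set A : ℝ := (σ * ((n + 1 : ℕ) * τ) + (1 - σ) * ((n : ℕ) * τ)) * lam + δ with hA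
      have hApos : 0 < A := by
        have h1 : (σ * ((n + 1 : ℕ) * τ) + (1 - σ) * ((n : ℕ) * τ)) = ((n : ℝ) + σ) * τ := by
          push_cast; ring
        rw [hA, h1]
        have hn0 : (0 : ℝ) ≤ (n : ℝ) := Nat.cast_nonneg n
        nlinarith [mul_nonneg (mul_nonneg (by linarith : (0:ℝ) ≤ (n:ℝ) + σ) hτpos.le) hlam]
      have heq : φ (n + 1) * (A + τ * α * lam * σ) = φ n * (A - τ * α * lam * (1 - σ)) := by
        have h2 : A * (φ (n + 1) - φ n) + τ * (α * lam * (σ * φ (n + 1) + (1 - σ) * φ n)) = 0 := by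
          have := mul_eq_zero_of_left hs τ
          field_simp at this ⊢
          linarith [this]
        ring_nf
        ring_nf at h2
        linarith [h2]
      have hden : 0 < A + τ * α * lam * σ := by
        have : 0 ≤ τ * α * lam * σ := by positivity
        linarith
      have habs : |A - τ * α * lam * (1 - σ)| ≤ A + τ * α * lam * σ := by
        have hτal : 0 ≤ τ * α * lam := by positivity
        rw [abs_le]
        constructor <;> nlinarith
      have hmul : |φ (n + 1)| * (A + τ * α * lam * σ) ≤ 1 * (A + τ * α * lam * σ) := by
        calc |φ (n + 1)| * (A + τ * α * lam * σ)
            = |φ (n + 1) * (A + τ * α * lam * σ)| := by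
              rw [abs_mul, abs_of_pos hden]
          _ = |φ n * (A - τ * α * lam * (1 - σ))| := by rw [heq]
          _ = |φ n| * |A - τ * α * lam * (1 - σ)| := abs_mul _ _
          _ ≤ 1 * (A + τ * α * lam * σ) := by
              apply mul_le_mul ihn habs (abs_nonneg _) (by norm_num)
      exact le_of_mul_le_mul_right (by linarith [hmul]) hden
  intro n hn
  exact key (n + 1) hn
end
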